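/- Let x be a skew-adjoint endomorphism of (V, B). Let W := span_k{x^n e : n ≥ 0} ⊆ V, the k[x]-submodule of V generated by e, and let U := {v ∈ V : B(w, v) = 0 for all w ∈ W}. The following are equivalent: (a) x has no nonzero isotropic eigenvector lying in V_H; (b) the restriction of B to U is nondegenerate and dim U ≤ 1. -/

import Mathlib

/-!
The subspace `U` lies in `V_H` and is `x`-invariant, being the orthogonal of the `x`-invariant
subspace `k[x]e` for a skew form. Conversely an eigenvector `v ∈ V_H`, `x v = c v`, satisfies
`B(xᵐe, v) = (-c)ᵐ B(e, v) = 0`, so it lies in `U`. Hence (a) says that `x` has no isotropic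
eigenvector in `U`.

If so, the radical `U ∩ U^⊥` is `x`-invariant and totally isotropic, so it contains no eigenvector
and vanishes. Every eigenvector in `U` is anisotropic, so by skewness lies in `ker x`; if
`dim U ≥ 2`, an eigenvector `v` and one `w` in the invariant subspace `U ∩ v^⊥` give the isotropic
eigenvector `v + t w`, `t² = -B(v,v)/B(w,w)`. Conversely, a nondegenerate form on a space of
dimension at most one has no nonzero isotropic vector.
-/

/-- The `B`-orthogonal complement `U` of the `k[x]`-submodule `W = k[x]·e` of `V`. -/
noncomputable def Uperp {k V : Type*} [Field k] [AddCommGroup V] [Module k V]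
    (B : LinearMap.BilinForm k V) (e : V) (x : Module.End k V) : Submodule k V :=
  LinearMap.BilinForm.orthogonal B
    (Submodule.span k (Set.range fun m : ℕ => (x ^ m) e))

open Module Module.End Submodule LinearMap.BilinForm

namespace Module.End

variable {k V : Type*} [Field k] [AddCommGroup V] [Module k V] (x : End k V)

theorem span_range_pow_apply_mem_invtSubmodule (e : V) :
    span k (Set.range fun m : ℕ => (x ^ m) e) ∈ x.invtSubmodule := by
  rw [mem_invtSubmodule, span_le, Set.range_subset_iff]
  intro m
  rw [SetLike.mem_coe, mem_comap, ← Module.End.mul_apply, ← pow_succ']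
  exact subset_span ⟨m + 1, rfl⟩

theorem span_singleton_mem_invtSubmodule {c : k} {v : V} (hv : x v = c • v) :
    (k ∙ v) ∈ x.invtSubmodule := by
  rw [mem_invtSubmodule, span_singleton_le_iff_mem, mem_comap, hv]
  exact smul_mem _ c (mem_span_singleton_self v)

theorem exists_eigenvector_mem_of_mem_invtSubmodule [IsAlgClosed k] [FiniteDimensional k V]
    {S : Submodule k V} (hS : S ∈ x.invtSubmodule) (hne : S ≠ ⊥) :
    ∃ (c : k) (v : V), v ∈ S ∧ v ≠ 0 ∧ x v = c • v := by
  have : Nontrivial S := nontrivial_iff_ne_bot.mpr hne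
  obtain ⟨c, hc⟩ := exists_eigenvalue (x.restrict hS)
  obtain ⟨v, hv⟩ := hc.exists_hasEigenvector
  exact ⟨c, v, v.2, by simpa using hv.2, congrArg Subtype.val hv.apply_eq_smul⟩

end Module.End

namespace LinearMap.BilinForm

variable {k V : Type*} [Field k] [AddCommGroup V] [Module k V] {B : LinearMap.BilinForm k V}
  {x : End k V}

theorem orthogonal_mem_invtSubmodule_of_skew (hskew : ∀ u v, B (x u) v = -B u (x v))
    {S : Submodule k V} (hS : S ∈ x.invtSubmodule) : B.orthogonal S ∈ x.invtSubmodule := by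
  intro v hv
  rw [mem_comap, mem_orthogonal_iff]
  intro n hn
  have hxn : B (x n) v = 0 := mem_orthogonal_iff.mp hv _ (hS hn)
  rw [hskew, neg_eq_zero] at hxn
  exact hxn

theorem eigenvalue_eq_zero_of_skew [CharZero k] (hskew : ∀ u v, B (x u) v = -B u (x v))
    {c : k} {v : V} (hv : x v = c • v) (hvv : B v v ≠ 0) : c = 0 := by
  have h := hskew v v
  simp only [hv, map_smul, LinearMap.smul_apply, smul_eq_mul] at h
  have : (2 * c) * B v v = 0 := by linear_combination h
  simpa using (mul_eq_zero.mp this).resolve_right hvv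

theorem apply_pow_apply_of_skew (hskew : ∀ u v, B (x u) v = -B u (x v))
    {c : k} {v : V} (hv : x v = c • v) (u : V) (m : ℕ) :
    B ((x ^ m) u) v = (-c) ^ m * B u v := by
  induction m with
  | zero => simp
  | succ m ih =>
    rw [pow_succ', Module.End.mul_apply, hskew, hv, map_smul, smul_eq_mul, ih]
    ring

theorem exists_isotropic_add_smul [IsAlgClosed k] (hsymm : ∀ u v, B u v = B v u)
    {v w : V} (hv : v ≠ 0) (hvw : B v w = 0) (hww : B w w ≠ 0) :
    ∃ t : k, v + t • w ≠ 0 ∧ B (v + t • w) (v + t • w) = 0 := by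
  obtain ⟨t, ht⟩ := IsAlgClosed.exists_pow_nat_eq (-B v v / B w w) two_pos
  have hwv : B w v = 0 := by rw [hsymm, hvw]
  refine ⟨t, fun h ↦ hv ?_, ?_⟩
  · have hB : B w (v + t • w) = t * B w w := by simp [hwv]
    rw [h, map_zero, eq_comm, mul_eq_zero, or_iff_left hww] at hB
    simpa [hB] using h
  · simp only [map_add, map_smul, LinearMap.add_apply, LinearMap.smul_apply, smul_eq_mul, hvw,
      hwv]
    field_simp at ht
    linear_combination ht

theorem eq_zero_of_isotropic_of_restrict_nondegenerate [FiniteDimensional k V]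
    {S : Submodule k V} (hnd : (B.restrict S).Nondegenerate) (hrk : finrank k S ≤ 1)
    {v : V} (hv : v ∈ S) (hvv : B v v = 0) : v = 0 := by
  by_contra hv0
  have hv0' : (⟨v, hv⟩ : S) ≠ 0 := by simpa using hv0
  have hrk1 : finrank k S = 1 :=
    le_antisymm hrk (finrank_pos_iff_exists_ne_zero.mpr ⟨_, hv0'⟩)
  refine hv0' (hnd.1 _ fun w ↦ ?_)
  obtain ⟨c, rfl⟩ := (finrank_eq_one_iff_of_nonzero' _ hv0').mp hrk1 w
  simp [hvv]

section Skew

variable [IsAlgClosed k] [FiniteDimensional k V] {S : Submodule k V}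

theorem restrict_nondegenerate_of_forall_eigenvector_not_isotropic
    (hsymm : ∀ u v, B u v = B v u) (hskew : ∀ u v, B (x u) v = -B u (x v))
    (hS : S ∈ x.invtSubmodule)
    (hiso : ∀ (c : k) (v : V), v ∈ S → v ≠ 0 → x v = c • v → B v v ≠ 0) :
    (B.restrict S).Nondegenerate := by
  refine nondegenerate_restrict_of_disjoint_orthogonal B (fun u v h ↦ by rwa [hsymm]) ?_
  rw [disjoint_iff]
  by_contra hne
  have hR : S ⊓ B.orthogonal S ∈ x.invtSubmodule :=
    x.invtSubmodule.inf_mem hS (orthogonal_mem_invtSubmodule_of_skew hskew hS)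
  obtain ⟨c, v, ⟨hvS, hvS'⟩, hv0, hxv⟩ :=
    x.exists_eigenvector_mem_of_mem_invtSubmodule hR hne
  exact hiso c v hvS hv0 hxv (mem_orthogonal_iff.mp hvS' v hvS)

theorem finrank_le_one_of_forall_eigenvector_not_isotropic [CharZero k]
    (hsymm : ∀ u v, B u v = B v u) (hskew : ∀ u v, B (x u) v = -B u (x v))
    (hS : S ∈ x.invtSubmodule)
    (hiso : ∀ (c : k) (v : V), v ∈ S → v ≠ 0 → x v = c • v → B v v ≠ 0) :
    finrank k S ≤ 1 := by
  by_contra! hrk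
  have hS0 : S ≠ ⊥ := by
    rintro rfl
    simp at hrk
  obtain ⟨c, v, hvS, hv0, hxv⟩ := x.exists_eigenvector_mem_of_mem_invtSubmodule hS hS0
  have hvv := hiso c v hvS hv0 hxv
  have hS' : S ⊓ B.orthogonal (k ∙ v) ∈ x.invtSubmodule :=
    x.invtSubmodule.inf_mem hS <|
      orthogonal_mem_invtSubmodule_of_skew hskew (x.span_singleton_mem_invtSubmodule hxv)
  have hS'0 : S ⊓ B.orthogonal (k ∙ v) ≠ ⊥ := by
    obtain ⟨u, hu, hu0⟩ := (Submodule.ne_bot_iff _).mp <|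
      LinearMap.ker_ne_bot_of_finrank_lt (f := (B v).comp S.subtype) (by simpa using hrk)
    rw [Submodule.ne_bot_iff]
    refine ⟨u, ⟨u.2, ?_⟩, by simpa using hu0⟩
    rw [orthogonal_span_singleton_eq_toLin_ker]
    exact hu
  obtain ⟨d, w, ⟨hwS, hwv⟩, hw0, hxw⟩ :=
    x.exists_eigenvector_mem_of_mem_invtSubmodule hS' hS'0
  have hww := hiso d w hwS hw0 hxw
  rw [orthogonal_span_singleton_eq_toLin_ker] at hwv
  obtain ⟨t, hz0, hzz⟩ := exists_isotropic_add_smul hsymm hv0 (LinearMap.mem_ker.mp hwv) hww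
  refine hiso 0 _ (add_mem hvS (smul_mem _ t hwS)) hz0 ?_ hzz
  simp [hxv, hxw, eigenvalue_eq_zero_of_skew hskew hxv hvv,
    eigenvalue_eq_zero_of_skew hskew hxw hww]

end Skew

end LinearMap.BilinForm

section Uperp

variable {k V : Type*} [Field k] [AddCommGroup V] [Module k V] {B : LinearMap.BilinForm k V}
  {e : V} {x : End k V}

theorem mem_Uperp_iff {v : V} : v ∈ Uperp B e x ↔ ∀ m : ℕ, B ((x ^ m) e) v = 0 := by
  change span k _ ≤ LinearMap.ker (B.flip v) ↔ _
  rw [span_le, Set.range_subset_iff]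
  rfl

theorem Uperp_le_ker : Uperp B e x ≤ LinearMap.ker (B e) :=
  fun _ hv ↦ by simpa using mem_Uperp_iff.mp hv 0

theorem Uperp_mem_invtSubmodule (hskew : ∀ u v, B (x u) v = -B u (x v)) :
    Uperp B e x ∈ x.invtSubmodule :=
  orthogonal_mem_invtSubmodule_of_skew hskew (x.span_range_pow_apply_mem_invtSubmodule e)

theorem mem_Uperp_of_apply_eq_smul (hskew : ∀ u v, B (x u) v = -B u (x v)) {c : k} {v : V}
    (hve : v ∈ LinearMap.ker (B e)) (hv : x v = c • v) : v ∈ Uperp B e x :=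
  mem_Uperp_iff.mpr fun m ↦ by
    rw [apply_pow_apply_of_skew hskew hv, LinearMap.mem_ker.mp hve, mul_zero]

end Uperp

theorem statement12 (k V : Type*) [Field k] [IsAlgClosed k] [CharZero k]
    [AddCommGroup V] [Module k V] [FiniteDimensional k V]
    (B : LinearMap.BilinForm k V)
    (hsymm : ∀ u v : V, B u v = B v u)
    (e : V)
    (x : Module.End k V)
    (hskew : ∀ u v : V, B (x u) v = - B u (x v)) :
    (¬ ∃ (c : k) (v : V),
        v ∈ LinearMap.ker (B e) ∧ v ≠ 0 ∧ B v v = 0 ∧ x v = c • v) ↔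
      (LinearMap.BilinForm.Nondegenerate
          (B.domRestrict₁₂ (Uperp B e x) (Uperp B e x)) ∧
        Module.finrank k ↥(Uperp B e x) ≤ 1) := by
  have hU := Uperp_mem_invtSubmodule (e := e) hskew
  constructor
  · intro h
    have hiso :
        ∀ (c : k) (v : V), v ∈ Uperp B e x → v ≠ 0 → x v = c • v → B v v ≠ 0 :=
      fun c v hv hv0 hxv hvv ↦ h ⟨c, v, Uperp_le_ker hv, hv0, hvv, hxv⟩
    exact ⟨restrict_nondegenerate_of_forall_eigenvector_not_isotropic hsymm hskew hU hiso,
      finrank_le_one_of_forall_eigenvector_not_isotropic hsymm hskew hU hiso⟩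
  · rintro ⟨hnd, hrk⟩ ⟨c, v, hve, hv0, hvv, hxv⟩
    exact hv0 <| eq_zero_of_isotropic_of_restrict_nondegenerate hnd hrk
      (mem_Uperp_of_apply_eq_smul hskew hve hxv) hvv
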